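/- arXiv:math/0607041 — 4 statements merged into one kernel-verified Lean document; each statement's English description precedes it below -/
import Mathlib

section
/- Let U be an open subset of ℝ^N, and let m ≥ 0 and k ≥ 1 be integers. Let T ⊆ U be a set whose Hausdorff dimension is at most m. Let Z = {Z(t) : t ∈ U} be a jointly measurable stochastic process with values in ℝ^{m+k} whose sample paths are almost surely of class C¹ on U. Let u ∈ ℝ^{m+k} and suppose there exist a neighborhood V of u and a constant M such that for every t ∈ T the random vector Z(t) has a density p_{Z(t)} on ℝ^{m+k} satisfying p_{Z(t)}(v) ≤ M for all v ∈ V. Then almost surely there is no point t ∈ T such that Z(t) = u. -/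
/-!
Since `dimH T ≤ m`, the `(m + 1)`-dimensional Hausdorff measure of `T` vanishes, so `T` can be
covered by sets `Aₙ` of small diameter with `∑ (diam Aₙ) ^ (m + 1)` arbitrarily small. If a path is
`L`-Lipschitz on `T` and hits `u` in `Aₙ`, then its value at any fixed point of `T ∩ Aₙ` lies within
`L diam Aₙ` of `u`, which by the density bound has probability `O((diam Aₙ) ^ (m + k))`, and
`m + k ≥ m + 1`. Summing over `n`, such hits have probability zero. A `C¹` path is Lipschitz with an
integer constant on some member of a countable basis around each point, so countably many of these
null events cover the event that the path hits `u` on `T`.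
-/

open MeasureTheory Metric Set TopologicalSpace
open scoped ENNReal NNReal Topology

theorem exists_cover_tsum_ediam_rpow_lt {X : Type*} [EMetricSpace X] [MeasurableSpace X]
    [BorelSpace X] {d : ℝ} (hd : 0 < d) {S : Set X} (hS : μH[d] S = 0) {δ ε : ℝ≥0∞}
    (hδ : 0 < δ) (hε : 0 < ε) :
    ∃ t : ℕ → Set X, S ⊆ ⋃ n, t n ∧ (∀ n, ediam (t n) ≤ δ) ∧ ∑' n, ediam (t n) ^ d < ε := by
  have hδS : (⨅ (t : ℕ → Set X) (_ : S ⊆ ⋃ n, t n) (_ : ∀ n, ediam (t n) ≤ δ),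
      ∑' n, ⨆ _ : (t n).Nonempty, ediam (t n) ^ d) < ε := by
    refine lt_of_le_of_lt ?_ hε
    rw [← hS, Measure.hausdorffMeasure_apply]
    exact le_iSup₂ (f := fun (r : ℝ≥0∞) (_ : 0 < r) =>
      ⨅ (t : ℕ → Set X) (_ : S ⊆ ⋃ n, t n) (_ : ∀ n, ediam (t n) ≤ r),
        ∑' n, ⨆ _ : (t n).Nonempty, ediam (t n) ^ d) δ hδ
  simp only [iInf_lt_iff] at hδS
  obtain ⟨t, hcov, hdiam, hsum⟩ := hδS
  refine ⟨t, hcov, hdiam, lt_of_eq_of_lt (tsum_congr fun n => ?_) hsum⟩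
  rcases (t n).eq_empty_or_nonempty with hn | hn
  · simp [hn, ENNReal.zero_rpow_of_pos hd]
  · rw [iSup_pos hn]

theorem measure_lipschitzOnWith_and_exists_eq_le {X Y Ω : Type*} [PseudoEMetricSpace X]
    [PseudoEMetricSpace Y] [MeasurableSpace Ω] (P : Measure Ω) (F : X → Ω → Y) (u : Y)
    {A : Set X} {L : ℝ≥0} {b : ℝ≥0∞}
    (hb : ∀ x ∈ A, P {ω | edist (F x ω) u ≤ L * ediam A} ≤ b) :
    P {ω | LipschitzOnWith L (fun x => F x ω) A ∧ ∃ x ∈ A, F x ω = u} ≤ b := by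
  rcases A.eq_empty_or_nonempty with rfl | ⟨c, hc⟩
  · simp
  refine (measure_mono ?_).trans (hb c hc)
  rintro ω ⟨hL, x, hx, hxu⟩
  calc edist (F c ω) u = edist (F c ω) (F x ω) := by rw [hxu]
    _ ≤ L * edist c x := hL hc hx
    _ ≤ L * ediam A := by gcongr; exact edist_le_ediam_of_mem hc hx

theorem measure_lipschitzOnWith_and_exists_eq_eq_zero {X Y Ω : Type*} [EMetricSpace X]
    [MeasurableSpace X] [BorelSpace X] [PseudoEMetricSpace Y] [MeasurableSpace Ω]
    (P : Measure Ω) (F : X → Ω → Y) (u : Y) {S : Set X} {d : ℝ} (hd : 0 < d)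
    (hS : μH[d] S = 0) {C r₀ : ℝ≥0∞} (hC : C ≠ ∞) (hr₀ : 0 < r₀)
    (hF : ∀ x ∈ S, ∀ r ≤ r₀, P {ω | edist (F x ω) u ≤ r} ≤ C * r ^ d) (L : ℝ≥0) :
    P {ω | LipschitzOnWith L (fun x => F x ω) S ∧ ∃ x ∈ S, F x ω = u} = 0 := by
  set K := C * (L : ℝ≥0∞) ^ d
  have hK : K ≠ ∞ :=
    ENNReal.mul_ne_top hC (ENNReal.rpow_ne_top_of_nonneg hd.le ENNReal.coe_ne_top)
  refine le_antisymm (ENNReal.le_of_forall_pos_le_add fun ε hε _ => ?_) zero_le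
  obtain ⟨t, hcov, hdiam, hsum⟩ :=
    exists_cover_tsum_ediam_rpow_lt hd hS (δ := r₀ / L) (ε := ε / K)
      (ENNReal.div_pos hr₀.ne' ENNReal.coe_ne_top)
      (ENNReal.div_pos_iff.2 ⟨by simpa using hε.ne', hK⟩)
  have hpiece : ∀ n, P {ω | LipschitzOnWith L (fun x => F x ω) (S ∩ t n) ∧
      ∃ x ∈ S ∩ t n, F x ω = u} ≤ K * ediam (t n) ^ d := by
    intro n
    refine measure_lipschitzOnWith_and_exists_eq_le P F u fun x hx => ?_
    have hr : (L : ℝ≥0∞) * ediam (S ∩ t n) ≤ r₀ :=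
      calc (L : ℝ≥0∞) * ediam (S ∩ t n) ≤ L * (r₀ / L) := by
            gcongr; exact (ediam_mono inter_subset_right).trans (hdiam n)
        _ ≤ r₀ := ENNReal.mul_div_le
    calc _ ≤ C * (L * ediam (S ∩ t n)) ^ d := hF x hx.1 _ hr
      _ ≤ C * (L * ediam (t n)) ^ d := by gcongr; exact inter_subset_right
      _ = K * ediam (t n) ^ d := by rw [ENNReal.mul_rpow_of_nonneg _ _ hd.le, mul_assoc]
  calc _ ≤ P (⋃ n, {ω | LipschitzOnWith L (fun x => F x ω) (S ∩ t n) ∧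
        ∃ x ∈ S ∩ t n, F x ω = u}) := by
        refine measure_mono fun ω ⟨hL, x, hx, hxu⟩ => ?_
        obtain ⟨n, hn⟩ := mem_iUnion.1 (hcov hx)
        exact mem_iUnion.2 ⟨n, hL.mono inter_subset_left, x, ⟨hx, hn⟩, hxu⟩
    _ ≤ ∑' n, K * ediam (t n) ^ d := (measure_iUnion_le _).trans (ENNReal.tsum_le_tsum hpiece)
    _ = K * ∑' n, ediam (t n) ^ d := ENNReal.tsum_mul_left
    _ ≤ K * (ε / K) := by gcongr
    _ ≤ 0 + ε := by rw [zero_add]; exact ENNReal.mul_div_le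

theorem measure_preimage_le_of_map_eq_withDensity {Ω E : Type*} [MeasurableSpace Ω]
    [MeasurableSpace E] {P : Measure Ω} {X : Ω → E} (hX : AEMeasurable X P) {μ : Measure E}
    {f : E → ℝ} (hdens : P.map X = μ.withDensity fun v => ENNReal.ofReal (f v)) {s : Set E}
    (hs : MeasurableSet s) {M : ℝ} (hf : ∀ v ∈ s, f v ≤ M) :
    P (X ⁻¹' s) ≤ ENNReal.ofReal M * μ s := by
  rw [← Measure.map_apply_of_aemeasurable hX hs, hdens, withDensity_apply _ hs]
  calc ∫⁻ v in s, ENNReal.ofReal (f v) ∂μ ≤ ∫⁻ _ in s, ENNReal.ofReal M ∂μ :=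
        setLIntegral_mono' hs fun v hv => ENNReal.ofReal_le_ofReal (hf v hv)
    _ = ENNReal.ofReal M * μ s := setLIntegral_const _ _

section FiniteDimensional

variable {E : Type*} [NormedAddCommGroup E] [NormedSpace ℝ E] [MeasurableSpace E] [BorelSpace E]
  [FiniteDimensional ℝ E] (μ : Measure E) [μ.IsAddHaarMeasure]

theorem MeasureTheory.Measure.addHaar_closedEBall (x : E) {r : ℝ≥0∞} (hr : r ≠ ∞) :
    μ (closedEBall x r) = r ^ Module.finrank ℝ E * μ (ball 0 1) := by
  lift r to ℝ≥0 using hr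
  rw [closedEBall_coe, Measure.addHaar_closedBall μ x r.coe_nonneg,
    ENNReal.ofReal_pow r.coe_nonneg, ENNReal.ofReal_coe_nnreal]

theorem measure_edist_le_le_of_density_le {Ω : Type*} [MeasurableSpace Ω] {P : Measure Ω}
    {X : Ω → E} (hX : AEMeasurable X P) {f : E → ℝ}
    (hdens : P.map X = μ.withDensity fun v => ENNReal.ofReal (f v)) {d : ℕ}
    (hd : d ≤ Module.finrank ℝ E) {u : E} {r : ℝ≥0∞} (hr : r ≤ 1) {M : ℝ}
    (hf : ∀ v ∈ closedEBall u r, f v ≤ M) :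
    P {ω | edist (X ω) u ≤ r} ≤ ENNReal.ofReal M * μ (ball 0 1) * r ^ d := by
  calc P {ω | edist (X ω) u ≤ r} = P (X ⁻¹' closedEBall u r) := rfl
    _ ≤ ENNReal.ofReal M * μ (closedEBall u r) :=
      measure_preimage_le_of_map_eq_withDensity hX hdens isClosed_closedEBall.measurableSet hf
    _ = ENNReal.ofReal M * μ (ball 0 1) * r ^ Module.finrank ℝ E := by
      rw [Measure.addHaar_closedEBall μ u (hr.trans_lt ENNReal.one_lt_top).ne]; ring
    _ ≤ ENNReal.ofReal M * μ (ball 0 1) * r ^ d := by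
      gcongr _ * ?_; exact pow_le_pow_of_le_one zero_le hr hd

end FiniteDimensional

theorem hausdorffMeasure_natCast_succ_eq_zero {X : Type*} [EMetricSpace X] [MeasurableSpace X]
    [BorelSpace X] {s : Set X} {m : ℕ} (h : dimH s ≤ m) : μH[((m + 1 : ℕ) : ℝ)] s = 0 := by
  have hlt : dimH s < ((m + 1 : ℝ≥0) : ℝ≥0∞) := h.trans_lt (by exact_mod_cast Nat.lt_succ_self m)
  simpa using hausdorffMeasure_of_dimH_lt hlt

theorem exists_mem_countableBasis_lipschitzOnWith {X Y : Type*} [PseudoEMetricSpace X]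
    [SecondCountableTopology X] [PseudoEMetricSpace Y] {f : X → Y} {x : X} {K : ℝ≥0}
    {s : Set X} (hs : s ∈ 𝓝 x) (hf : LipschitzOnWith K f s) :
    ∃ B ∈ countableBasis X, x ∈ B ∧ ∃ L : ℕ, LipschitzOnWith L f B := by
  obtain ⟨B, hB, hxB, hBs⟩ := (isBasis_countableBasis X).mem_nhds_iff.1 hs
  exact ⟨B, hB, hxB, ⌈K⌉₊, (hf.mono hBs).weaken (Nat.le_ceil K)⟩

theorem bulinskaya_general
    {N m k : ℕ} (hk : 1 ≤ k)
    {Ω : Type*} [MeasurableSpace Ω] (P : Measure Ω)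
    (U : Set (EuclideanSpace ℝ (Fin N))) (hU : IsOpen U)
    (T : Set (EuclideanSpace ℝ (Fin N))) (hTU : T ⊆ U)
    (hdim : dimH T ≤ (m : ℝ≥0∞))
    (Z : EuclideanSpace ℝ (Fin N) → Ω → EuclideanSpace ℝ (Fin (m + k)))
    (hmeas : Measurable (Function.uncurry Z))
    (hC1 : ∀ᵐ ω ∂P, ContDiffOn ℝ 1 (fun t => Z t ω) U)
    (u : EuclideanSpace ℝ (Fin (m + k)))
    (V : Set (EuclideanSpace ℝ (Fin (m + k)))) (hV : V ∈ nhds u)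
    (M : ℝ)
    (p : EuclideanSpace ℝ (Fin N) → EuclideanSpace ℝ (Fin (m + k)) → ℝ)
    (hdens : ∀ t ∈ T, P.map (Z t)
      = MeasureTheory.volume.withDensity (fun v => ENNReal.ofReal (p t v)))
    (hbound : ∀ t ∈ T, ∀ v ∈ V, p t v ≤ M) :
    ∀ᵐ ω ∂P, ∀ t ∈ T, Z t ω ≠ u := by
  obtain ⟨ε, hε, hεV⟩ := nhds_basis_closedEBall.mem_iff.1 hV
  have hsmall : ∀ t ∈ T, ∀ r ≤ min ε 1, P {ω | edist (Z t ω) u ≤ r} ≤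
      ENNReal.ofReal M * volume (ball (0 : EuclideanSpace ℝ (Fin (m + k))) 1) *
        r ^ ((m + 1 : ℕ) : ℝ) := fun t ht r hr => by
    rw [ENNReal.rpow_natCast]
    exact measure_edist_le_le_of_density_le volume
      (hmeas.comp measurable_prodMk_left).aemeasurable (hdens t ht)
      (by rw [finrank_euclideanSpace_fin]; omega)
      (hr.trans (min_le_right _ _))
      fun v hv => hbound t ht v
        (hεV (closedEBall_subset_closedEBall (hr.trans (min_le_left _ _)) hv))
  have hgood : ∀ᵐ ω ∂P, ∀ B ∈ countableBasis (EuclideanSpace ℝ (Fin N)), ∀ L : ℕ,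
      ¬(LipschitzOnWith L (fun t => Z t ω) B ∧ ∃ t ∈ T ∩ B, Z t ω = u) := by
    rw [ae_ball_iff (countable_countableBasis _)]
    refine fun B _ => ae_all_iff.2 fun L => measure_eq_zero_iff_ae_notMem.1 <|
      measure_mono_null ?_ (measure_lipschitzOnWith_and_exists_eq_eq_zero P Z u (S := T ∩ B)
        (by positivity)
        (measure_mono_null inter_subset_left (hausdorffMeasure_natCast_succ_eq_zero hdim))
        (by finiteness) (lt_min hε one_pos) (fun t ht => hsmall t ht.1) L)
    exact fun _ h => ⟨h.1.mono inter_subset_right, h.2⟩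
  filter_upwards [hC1, hgood] with ω hω hgoodω t ht htu
  obtain ⟨K, s, hs, hLip⟩ := (hω.contDiffAt (hU.mem_nhds (hTU ht))).exists_lipschitzOnWith
  obtain ⟨B, hB, htB, L, hL⟩ := exists_mem_countableBasis_lipschitzOnWith hs hLip
  exact hgoodω B hB L ⟨hL, t, ⟨ht, htB⟩, htu⟩

/-- Bulinskaya's lemma: if `T ⊆ U` has Hausdorff dimension at most `m` and the
`ℝ^{m+k}`-valued process `Z` has a.s. `C¹` paths on the open set `U` and uniformly
bounded one-dimensional densities near `u`, then a.s. no point of `T` is sent to `u`. -/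
theorem bulinskaya
    {N m k : ℕ} (hk : 1 ≤ k)
    {Ω : Type*} [MeasurableSpace Ω] (P : Measure Ω) [IsProbabilityMeasure P]
    (U : Set (EuclideanSpace ℝ (Fin N))) (hU : IsOpen U)
    (T : Set (EuclideanSpace ℝ (Fin N))) (hTU : T ⊆ U)
    (hdim : dimH T ≤ (m : ℝ≥0∞))
    (Z : EuclideanSpace ℝ (Fin N) → Ω → EuclideanSpace ℝ (Fin (m + k)))
    (hmeas : Measurable (Function.uncurry Z))
    (hC1 : ∀ᵐ ω ∂P, ContDiffOn ℝ 1 (fun t => Z t ω) U)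
    (u : EuclideanSpace ℝ (Fin (m + k)))
    (V : Set (EuclideanSpace ℝ (Fin (m + k)))) (hV : V ∈ nhds u)
    (M : ℝ)
    (p : EuclideanSpace ℝ (Fin N) → EuclideanSpace ℝ (Fin (m + k)) → ℝ)
    (hdens : ∀ t ∈ T, P.map (Z t)
      = MeasureTheory.volume.withDensity (fun v => ENNReal.ofReal (p t v)))
    (hbound : ∀ t ∈ T, ∀ v ∈ V, p t v ≤ M) :
    ∀ᵐ ω ∂P, ∀ t ∈ T, Z t ω ≠ u :=
  bulinskaya_general hk P U hU T hTU hdim Z hmeas hC1 u V hV M p hdens hbound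
end

section
/- Let a, b be real numbers with a² + b² = 1/2 and let n ∈ ℕ. Then for every x ∈ ℝ, ∫_{−∞}^{+∞} e^{−y²/2} H_n(ay + bx) dy = (2b)^n √(2π) · H̄_n(x). -/
/-- The Hermite polynomials `H_n(x) = (-1)^n e^{x²} (d/dx)^n e^{-x²}`. -/
noncomputable def hermiteH (n : ℕ) (x : ℝ) : ℝ :=
  (-1 : ℝ) ^ n * Real.exp (x ^ 2) * iteratedDeriv n (fun y => Real.exp (-y ^ 2)) x

/-- The modified Hermite polynomials `H̄_n(x) = (-1)^n e^{x²/2} (d/dx)^n e^{-x²/2}`. -/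
noncomputable def hermiteHbar (n : ℕ) (x : ℝ) : ℝ :=
  (-1 : ℝ) ^ n * Real.exp (x ^ 2 / 2) * iteratedDeriv n (fun y => Real.exp (-y ^ 2 / 2)) x

/-! Mathlib's `hermite n` is the probabilists' Hermite polynomial `He_n = H̄_n`, and
`H_n(x) = 2^{n/2} He_n(√2 x)`; with `α = √2 a`, `γ = √2 b` (so `α² + γ² = 1`) it remains to show
`I_n := ∫ e^{-y²/2} He_n(αy + γx) dy = √(2π) γ^n He_n(x)`. Gaussian integration by parts,
`∫ e^{-y²/2} y f(y) dy = ∫ e^{-y²/2} f'(y) dy`, turns `He_{n+1} = X He_n - He_n'` into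
`I_{n+1} = γx I_n - γ² n I_{n-1}`, which is also the recurrence of `γ^n He_n(x)` because
`He_n' = n He_{n-1}`. -/

open Polynomial MeasureTheory Real

theorem Polynomial.derivative_hermite_succ (n : ℕ) :
    derivative (hermite (n + 1)) = (n + 1 : ℤ[X]) * hermite n := by
  induction n with
  | zero => simp
  | succ n ih =>
    rw [hermite_succ (n + 1), derivative_sub, derivative_mul, derivative_X, ih, derivative_mul,
      derivative_add, derivative_natCast, derivative_one]
    push_cast
    linear_combination (-(n + 1 : ℤ[X])) * hermite_succ n

theorem hermiteHbar_eq_aeval_hermite (n : ℕ) (x : ℝ) : hermiteHbar n x = aeval x (hermite n) := by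
  simp only [hermiteHbar, hermite_eq_deriv_gaussian', iteratedDeriv_eq_iterate, neg_div]
  ring

theorem hermiteH_eq_sqrt_two_pow_mul_hermiteHbar (n : ℕ) (x : ℝ) :
    hermiteH n x = √2 ^ n * hermiteHbar n (√2 * x) := by
  have h2 : √2 ^ 2 = 2 := sq_sqrt zero_le_two
  have hsmooth : ContDiff ℝ n fun t : ℝ => exp (-t ^ 2 / 2) := by fun_prop
  have hscale : (fun y : ℝ => exp (-y ^ 2)) = fun y => exp (-(√2 * y) ^ 2 / 2) := by
    ext y; rw [mul_pow, h2]; ring_nf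
  rw [hermiteH, hermiteHbar, hscale, iteratedDeriv_comp_const_mul hsmooth, mul_pow, h2]
  ring_nf

theorem integral_exp_neg_sq_div_two : ∫ y : ℝ, exp (-y ^ 2 / 2) = √(2 * π) := by
  simpa [neg_div, div_eq_inv_mul, div_inv_eq_mul, mul_comm] using integral_gaussian (1 / 2)

theorem integral_exp_neg_sq_div_two_mul_id_mul {f f' : ℝ → ℝ} (hf : ∀ y, HasDerivAt f (f' y) y)
    (hf_int : Integrable fun y => exp (-y ^ 2 / 2) * f y)
    (hf'_int : Integrable fun y => exp (-y ^ 2 / 2) * f' y)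
    (hyf_int : Integrable fun y => exp (-y ^ 2 / 2) * (y * f y)) :
    ∫ y, exp (-y ^ 2 / 2) * (y * f y) = ∫ y, exp (-y ^ 2 / 2) * f' y := by
  have hgauss (y : ℝ) : HasDerivAt (fun y => -exp (-y ^ 2 / 2)) (y * exp (-y ^ 2 / 2)) y := by
    have hexponent : HasDerivAt (fun y : ℝ => -y ^ 2 / 2) (-y) y :=
      ((hasDerivAt_pow 2 y).fun_neg.div_const 2).congr_deriv (by push_cast; ring)
    exact hexponent.exp.fun_neg.congr_deriv (by ring)
  have key := integral_mul_deriv_eq_deriv_mul_of_integrable (fun y _ => hf y) (fun y _ => hgauss y)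
    (hyf_int.congr (.of_forall fun y => by simp only [Pi.mul_apply]; ring))
    (hf'_int.neg.congr (.of_forall fun y => by simp only [Pi.mul_apply, Pi.neg_apply]; ring))
    (hf_int.neg.congr (.of_forall fun y => by simp only [Pi.mul_apply, Pi.neg_apply]; ring))
  simp only [mul_neg, integral_neg, neg_neg] at key
  calc ∫ y, exp (-y ^ 2 / 2) * (y * f y) = ∫ y, f y * (y * exp (-y ^ 2 / 2)) := by
        congr 1; ext y; ring
    _ = ∫ y, f' y * exp (-y ^ 2 / 2) := key
    _ = ∫ y, exp (-y ^ 2 / 2) * f' y := by simp_rw [mul_comm]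

theorem integrable_exp_neg_sq_div_two_mul_eval (p : ℝ[X]) :
    Integrable fun y => exp (-y ^ 2 / 2) * p.eval y := by
  have hmonomial (k : ℕ) : Integrable fun y : ℝ => exp (-y ^ 2 / 2) * y ^ k := by
    simpa [neg_div, div_eq_inv_mul, mul_comm] using
      integrable_rpow_mul_exp_neg_mul_sq (b := 1 / 2) one_half_pos (s := k)
        (neg_one_lt_zero.trans_le k.cast_nonneg)
  simp only [eval_eq_sum_range, Finset.mul_sum]
  exact integrable_finsetSum _ fun k _ =>
    ((hmonomial k).const_mul (p.coeff k)).congr (.of_forall fun y => by ring)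

theorem integrable_exp_neg_sq_div_two_mul_eval_affine (p : ℝ[X]) (α c : ℝ) :
    Integrable fun y => exp (-y ^ 2 / 2) * p.eval (α * y + c) :=
  (integrable_exp_neg_sq_div_two_mul_eval (p.comp (C α * X + C c))).congr
    (.of_forall fun y => by simp [eval_comp])

theorem integrable_exp_neg_sq_div_two_mul_id_mul_eval_affine (p : ℝ[X]) (α c : ℝ) :
    Integrable fun y => exp (-y ^ 2 / 2) * (y * p.eval (α * y + c)) :=
  (integrable_exp_neg_sq_div_two_mul_eval (X * p.comp (C α * X + C c))).congr
    (.of_forall fun y => by simp [eval_comp])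

theorem integral_exp_neg_sq_div_two_mul_eval_X_mul_sub_derivative (p : ℝ[X]) (α c : ℝ) :
    ∫ y, exp (-y ^ 2 / 2) * (X * p - derivative p).eval (α * y + c)
      = c * (∫ y, exp (-y ^ 2 / 2) * p.eval (α * y + c))
        - (1 - α ^ 2) * ∫ y, exp (-y ^ 2 / 2) * (derivative p).eval (α * y + c) := by
  have hp := integrable_exp_neg_sq_div_two_mul_eval_affine p α c
  have hp' := integrable_exp_neg_sq_div_two_mul_eval_affine (derivative p) α c
  have hyp := integrable_exp_neg_sq_div_two_mul_id_mul_eval_affine p α c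
  have hstein : ∫ y, exp (-y ^ 2 / 2) * (y * p.eval (α * y + c))
      = α * ∫ y, exp (-y ^ 2 / 2) * (derivative p).eval (α * y + c) := by
    have hderiv (y : ℝ) : HasDerivAt (fun y => p.eval (α * y + c))
        (α * (derivative p).eval (α * y + c)) y :=
      ((p.hasDerivAt _).comp y (((hasDerivAt_id y).const_mul α).add_const c)).congr_deriv
        (by simp [mul_comm])
    rw [integral_exp_neg_sq_div_two_mul_id_mul hderiv hp (hp'.const_mul α |>.congr
      (.of_forall fun y => by ring)) hyp, ← integral_const_mul]
    congr 1; ext y; ring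
  calc ∫ y, exp (-y ^ 2 / 2) * (X * p - derivative p).eval (α * y + c)
      = ∫ y, (α * (exp (-y ^ 2 / 2) * (y * p.eval (α * y + c)))
          + c * (exp (-y ^ 2 / 2) * p.eval (α * y + c)))
          - exp (-y ^ 2 / 2) * (derivative p).eval (α * y + c) := by
        congr 1; ext y; simp only [eval_sub, eval_mul, eval_X]; ring
    _ = α * (α * ∫ y, exp (-y ^ 2 / 2) * (derivative p).eval (α * y + c))
          + c * (∫ y, exp (-y ^ 2 / 2) * p.eval (α * y + c))
          - ∫ y, exp (-y ^ 2 / 2) * (derivative p).eval (α * y + c) := by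
        rw [integral_sub _ hp', integral_add (hyp.const_mul α) (hp.const_mul c),
          integral_const_mul, integral_const_mul, hstein]
        exact (hyp.const_mul α).add (hp.const_mul c)
    _ = _ := by ring

theorem integral_exp_neg_sq_div_two_mul_hermiteHbar {α γ : ℝ} (h : α ^ 2 + γ ^ 2 = 1) (n : ℕ)
    (x : ℝ) :
    ∫ y, exp (-y ^ 2 / 2) * hermiteHbar n (α * y + γ * x) = √(2 * π) * γ ^ n * hermiteHbar n x := by
  set He : ℕ → ℝ[X] := fun n => (hermite n).map (Int.castRingHom ℝ) with hHe
  have hHbar (n : ℕ) (z : ℝ) : hermiteHbar n z = (He n).eval z := by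
    rw [hermiteHbar_eq_aeval_hermite, aeval_def, eval₂_eq_eval_map]; rfl
  have hsucc (n : ℕ) : He (n + 1) = X * He n - derivative (He n) := by
    simp [hHe, hermite_succ, derivative_map]
  have hderiv (n : ℕ) : derivative (He (n + 1)) = (n + 1 : ℝ[X]) * He n := by
    simp only [hHe, derivative_map, derivative_hermite_succ, Polynomial.map_mul, Polynomial.map_add,
      Polynomial.map_natCast, Polynomial.map_one]
  have hγ : 1 - α ^ 2 = γ ^ 2 := by linarith
  simp only [hHbar]
  induction n using Nat.twoStepInduction with
  | zero => simp [hHe, integral_exp_neg_sq_div_two]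
  | one =>
    rw [hsucc, integral_exp_neg_sq_div_two_mul_eval_X_mul_sub_derivative]
    simp [hHe, integral_exp_neg_sq_div_two]
    ring
  | more n ih ih' =>
    rw [hsucc, integral_exp_neg_sq_div_two_mul_eval_X_mul_sub_derivative, ih', hderiv]
    simp only [eval_mul, eval_add, eval_natCast, eval_one, eval_sub, eval_X, mul_left_comm (exp _),
      integral_const_mul, ih, hγ]
    ring

/-- If `a² + b² = 1/2` then `∫ e^{-y²/2} H_n(ay + bx) dy = (2b)^n √(2π) H̄_n(x)`. -/
theorem integral_gaussian_hermite (a b : ℝ) (hab : a ^ 2 + b ^ 2 = 1 / 2)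
    (n : ℕ) (x : ℝ) :
    (∫ y : ℝ, Real.exp (-y ^ 2 / 2) * hermiteH n (a * y + b * x))
      = (2 * b) ^ n * Real.sqrt (2 * Real.pi) * hermiteHbar n x := by
  have hunit : (√2 * a) ^ 2 + (√2 * b) ^ 2 = 1 := by
    rw [mul_pow, mul_pow, sq_sqrt zero_le_two]; linarith
  calc ∫ y, exp (-y ^ 2 / 2) * hermiteH n (a * y + b * x)
      = √2 ^ n * ∫ y, exp (-y ^ 2 / 2) * hermiteHbar n (√2 * a * y + √2 * b * x) := by
        rw [← integral_const_mul]
        congr 1; ext y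
        rw [hermiteH_eq_sqrt_two_pow_mul_hermiteHbar, mul_add, ← mul_assoc √2 a, ← mul_assoc √2 b,
          mul_left_comm]
    _ = (√2 * (√2 * b)) ^ n * √(2 * π) * hermiteHbar n x := by
        rw [integral_exp_neg_sq_div_two_mul_hermiteHbar hunit]
        ring
    _ = (2 * b) ^ n * √(2 * π) * hermiteHbar n x := by
        rw [← mul_assoc, mul_self_sqrt zero_le_two]
end

section
/- Let S ⊂ ℝ^d be compact and let r be a symmetric positive semidefinite kernel of class C² on a neighborhood of S × S with r(t,t) = 1 for every t, and r(s,t) < 1 for all s, t ∈ S with s ≠ t. Suppose that for every t ∈ S the d × d matrix Λ_t := (∂²r/∂s_i∂t_k(t,t))_{i,k} is positive definite. Then there exists a constant L > 0 such that 1 − r(s,t) ≥ L‖s − t‖² for all s, t ∈ S. -/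
/-!
Positive semidefiniteness on the two points `s, t` with weights `1, -1` gives `r ≤ 1 = r(t,t)`,
so `r` is maximal on the diagonal and its gradient vanishes there. Differentiating this identity
along the diagonal gives `∂²r/∂s² (t,t) = -Λ_t` as quadratic forms, so `r(·, t)` is uniformly
strictly concave near the diagonal of the compact set `S`, and Taylor's formula along segments
yields the quadratic bound for `‖s - t‖ < δ`. For `‖s - t‖ ≥ δ` it follows from `r < 1` off the
diagonal by compactness.
-/

open Set Filter Metric Topology

theorem le_one_of_posSemidef_kernel {X : Type*} {r : X → X → ℝ} (hsym : ∀ s t, r s t = r t s)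
    (hpsd : ∀ (n : ℕ) (pts : Fin n → X) (c : Fin n → ℝ),
      0 ≤ ∑ i, ∑ j, c i * c j * r (pts i) (pts j))
    (hone : ∀ t, r t t = 1) (s t : X) : r s t ≤ 1 := by
  have h := hpsd 2 ![s, t] ![1, -1]
  simp only [Fin.sum_univ_two, Matrix.cons_val_zero, Matrix.cons_val_one, hone, hsym t s] at h
  linarith

theorem LinearMap.apply_self_pos_of_posDef {ι M : Type*} [AddCommGroup M] [Module ℝ M]
    (b : Module.Basis ι ℝ M) {B : M →ₗ[ℝ] M →ₗ[ℝ] ℝ}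
    (hB : (Matrix.of fun i j => B (b i) (b j)).PosDef) {x : M} (hx : x ≠ 0) : 0 < B x x := by
  rw [← LinearMap.sum_repr_mul_repr_mul b b x x]
  simpa [mul_comm, mul_left_comm] using hB.2 (b.repr.map_ne_zero_iff.2 hx)

theorem half_le_sub_of_hasDerivAt_of_le_neg {φ φ' φ'' : ℝ → ℝ} {c : ℝ}
    (hφ : ∀ τ ∈ Icc (0 : ℝ) 1, HasDerivAt φ (φ' τ) τ)
    (hφ' : ∀ τ ∈ Icc (0 : ℝ) 1, HasDerivAt φ' (φ'' τ) τ) (h0 : φ' 0 = 0)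
    (hle : ∀ τ ∈ Icc (0 : ℝ) 1, φ'' τ ≤ -c) : c / 2 ≤ φ 0 - φ 1 := by
  have hslope : AntitoneOn (fun τ => φ' τ + c * τ) (Icc 0 1) := by
    refine antitoneOn_of_hasDerivWithinAt_nonpos (convex_Icc 0 1)
      (fun τ hτ => ((hφ' τ hτ).add ((hasDerivAt_id τ).const_mul c)).continuousAt.continuousWithinAt)
      (fun τ hτ => ((hφ' τ (interior_subset hτ)).add
        ((hasDerivAt_id τ).const_mul c)).hasDerivWithinAt) fun τ hτ => ?_
    have := hle τ (interior_subset hτ)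
    simp only [mul_one]
    linarith
  have hφ'_le : ∀ τ ∈ Icc (0 : ℝ) 1, φ' τ + c * τ ≤ 0 := fun τ hτ => by
    simpa [h0] using hslope (left_mem_Icc.2 zero_le_one) hτ hτ.1
  have hψ : AntitoneOn (fun τ => φ τ + c / 2 * τ ^ 2) (Icc 0 1) := by
    have hd : ∀ τ ∈ Icc (0 : ℝ) 1,
        HasDerivAt (fun τ => φ τ + c / 2 * τ ^ 2) (φ' τ + c * τ) τ := fun τ hτ =>
      ((hφ τ hτ).add ((hasDerivAt_pow 2 τ).const_mul (c / 2))).congr_deriv (by norm_num; ring)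
    exact antitoneOn_of_hasDerivWithinAt_nonpos (convex_Icc 0 1)
      (fun τ hτ => (hd τ hτ).continuousAt.continuousWithinAt)
      (fun τ hτ => (hd τ (interior_subset hτ)).hasDerivWithinAt)
      fun τ hτ => hφ'_le τ (interior_subset hτ)
  have := hψ (left_mem_Icc.2 zero_le_one) (right_mem_Icc.2 zero_le_one) zero_le_one
  simp only at this
  linarith

theorem IsCompact.exists_pos_mul_le {X : Type*} [TopologicalSpace X] {K : Set X} {f g : X → ℝ}
    (hK : IsCompact K) (hf : ContinuousOn f K) (hg : ContinuousOn g K)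
    (hpos : ∀ x ∈ K, 0 < f x) : ∃ L > 0, ∀ x ∈ K, L * g x ≤ f x := by
  rcases K.eq_empty_or_nonempty with rfl | hne
  · exact ⟨1, one_pos, by simp⟩
  obtain ⟨x₀, hx₀, hmin⟩ := hK.exists_isMinOn hne hf
  obtain ⟨B, hB⟩ := hK.bddAbove_image hg
  have hB1 : 0 < max B 1 := lt_max_of_lt_right one_pos
  refine ⟨f x₀ / max B 1, div_pos (hpos x₀ hx₀) hB1, fun x hx => ?_⟩
  calc f x₀ / max B 1 * g x ≤ f x₀ / max B 1 * max B 1 := by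
        gcongr
        · exact (div_pos (hpos x₀ hx₀) hB1).le
        · exact (hB (mem_image_of_mem g hx)).trans (le_max_left B 1)
    _ = f x₀ := div_mul_cancel₀ _ hB1.ne'
    _ ≤ f x := hmin hx

theorem IsCompact.exists_thickening_forall_le_neg {X : Type*} [PseudoMetricSpace X]
    {K W : Set X} {Φ : X → ℝ} (hK : IsCompact K) (hW : IsOpen W) (hKW : K ⊆ W)
    (hΦ : ContinuousOn Φ W) (hneg : ∀ x ∈ K, Φ x < 0) :
    ∃ c > 0, ∃ δ > 0, ∀ x ∈ thickening δ K, x ∈ W ∧ Φ x ≤ -c := by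
  rcases K.eq_empty_or_nonempty with rfl | hne
  · exact ⟨1, one_pos, 1, one_pos, by simp⟩
  obtain ⟨x₀, hx₀, hmax⟩ := hK.exists_isMaxOn hne (hΦ.mono hKW)
  have hKO : K ⊆ W ∩ Φ ⁻¹' Iio (Φ x₀ / 2) := fun x hx => by
    have : Φ x ≤ Φ x₀ := hmax hx
    exact ⟨hKW hx, show Φ x < Φ x₀ / 2 by linarith [hneg x₀ hx₀]⟩
  obtain ⟨δ, hδ, hsub⟩ :=
    hK.exists_thickening_subset_open (hΦ.isOpen_inter_preimage hW isOpen_Iio) hKO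
  refine ⟨-(Φ x₀ / 2), by linarith [hneg x₀ hx₀], δ, hδ, fun x hx => ?_⟩
  obtain ⟨hxW, hxΦ⟩ := hsub hx
  exact ⟨hxW, by simp only [mem_preimage, mem_Iio] at hxΦ; linarith⟩

section SecondDerivative

variable {E : Type*} [NormedAddCommGroup E] [NormedSpace ℝ E]

theorem ContDiffAt.hasFDerivAt_fderiv {G : Type*} [NormedAddCommGroup G] [NormedSpace ℝ G]
    {f : E → G} {x : E} (hf : ContDiffAt ℝ 2 f x) :
    HasFDerivAt (fderiv ℝ f) (fderiv ℝ (fderiv ℝ f) x) x :=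
  ((hf.fderiv_right (m := 1) le_rfl).differentiableAt one_ne_zero).hasFDerivAt

theorem half_le_sub_of_fderiv_eq_zero_of_fderiv_fderiv_le {f : E → ℝ} {x v : E} {c : ℝ}
    (hf : ∀ τ ∈ Icc (0 : ℝ) 1, ContDiffAt ℝ 2 f (x + τ • v)) (hx : fderiv ℝ f x = 0)
    (hle : ∀ τ ∈ Icc (0 : ℝ) 1, fderiv ℝ (fderiv ℝ f) (x + τ • v) v v ≤ -c) :
    c / 2 ≤ f x - f (x + v) := by
  have hline : ∀ τ : ℝ, HasDerivAt (fun τ : ℝ => x + τ • v) v τ := fun τ => by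
    simpa using ((hasDerivAt_id τ).smul_const v).const_add x
  have hφ : ∀ τ ∈ Icc (0 : ℝ) 1,
      HasDerivAt (fun τ => f (x + τ • v)) (fderiv ℝ f (x + τ • v) v) τ := fun τ hτ =>
    ((hf τ hτ).differentiableAt two_ne_zero).hasFDerivAt.comp_hasDerivAt (x := τ) (hline τ)
  have hφ' : ∀ τ ∈ Icc (0 : ℝ) 1, HasDerivAt (fun τ => fderiv ℝ f (x + τ • v) v)
      (fderiv ℝ (fderiv ℝ f) (x + τ • v) v v) τ := fun τ hτ => by
    have hD : HasDerivAt (fun τ => fderiv ℝ f (x + τ • v))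
        (fderiv ℝ (fderiv ℝ f) (x + τ • v) v) τ :=
      (hf τ hτ).hasFDerivAt_fderiv.comp_hasDerivAt (x := τ) (hline τ)
    simpa using hD.clm_apply (hasDerivAt_const τ v)
  simpa using half_le_sub_of_hasDerivAt_of_le_neg hφ hφ' (by simp [hx]) hle

variable {F : E × E → ℝ}

theorem mixed_partial_eq_fderiv_fderiv_apply {x y : E} (hF : ContDiffAt ℝ 2 F (x, y)) (v w : E) :
    fderiv ℝ (fun y' => fderiv ℝ (fun x' => F (x', y')) x v) y w =
      fderiv ℝ (fderiv ℝ F) (x, y) (0, w) (v, 0) := by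
  have hdiff : ∀ᶠ y' in 𝓝 y, DifferentiableAt ℝ F (x, y') :=
    ((Continuous.prodMk_right x).tendsto y).eventually <|
      (hF.eventually (by simp)).mono fun p hp => hp.differentiableAt two_ne_zero
  have hpartial : (fun y' => fderiv ℝ (fun x' => F (x', y')) x v) =ᶠ[𝓝 y]
      fun y' => fderiv ℝ F (x, y') (v, 0) := hdiff.mono fun y' hy' => by
    have hd : HasFDerivAt (fun x' => F (x', y'))
        ((fderiv ℝ F (x, y')).comp (ContinuousLinearMap.inl ℝ E E)) x :=
      hy'.hasFDerivAt.comp x (hasFDerivAt_prodMk_left x y')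
    simp [hd.fderiv]
  have hd : HasFDerivAt (fun y' => fderiv ℝ F (x, y') (v, 0))
      ((fderiv ℝ (fderiv ℝ F) (x, y)).comp (ContinuousLinearMap.inr ℝ E E) |>.flip (v, 0)) y := by
    simpa using (hF.hasFDerivAt_fderiv.comp y (hasFDerivAt_prodMk_right x y)).clm_apply
      (hasFDerivAt_const ((v, 0) : E × E) y)
  simp [hpartial.fderiv_eq, hd.fderiv]

theorem fderiv_fderiv_apply_diag_eq_zero {t : E}
    (hF : DifferentiableAt ℝ (fderiv ℝ F) (t, t))
    (hcrit : ∀ᶠ x in 𝓝 t, fderiv ℝ F (x, x) = 0) (h : E) :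
    fderiv ℝ (fderiv ℝ F) (t, t) (h, h) = 0 := by
  have hdiag : HasFDerivAt (fun x => fderiv ℝ F (x, x)) ((fderiv ℝ (fderiv ℝ F) (t, t)).comp
      ((ContinuousLinearMap.id ℝ E).prod (ContinuousLinearMap.id ℝ E))) t :=
    hF.hasFDerivAt.comp (f := fun x => (x, x)) t ((hasFDerivAt_id t).prodMk (hasFDerivAt_id t))
  have hzero : HasFDerivAt (fun x => fderiv ℝ F (x, x)) (0 : E →L[ℝ] E × E →L[ℝ] ℝ) t :=
    (hasFDerivAt_const 0 t).congr_of_eventuallyEq hcrit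
  simpa using congr($(hdiag.unique hzero) h)

end SecondDerivative

theorem fderiv_fderiv_apply_inl_neg {d : ℕ}
    {r : EuclideanSpace ℝ (Fin d) → EuclideanSpace ℝ (Fin d) → ℝ} {t : EuclideanSpace ℝ (Fin d)}
    (hr : ContDiffAt ℝ 2 (Function.uncurry r) (t, t))
    (hcrit : ∀ᶠ x in 𝓝 t, fderiv ℝ (Function.uncurry r) (x, x) = 0)
    (hpos : (Matrix.of fun i k : Fin d =>
        fderiv ℝ (fun t' : EuclideanSpace ℝ (Fin d) =>
          fderiv ℝ (fun s : EuclideanSpace ℝ (Fin d) => r s t') t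
            (EuclideanSpace.single i 1)) t (EuclideanSpace.single k 1)).PosDef)
    {h : EuclideanSpace ℝ (Fin d)} (hh : h ≠ 0) :
    fderiv ℝ (fderiv ℝ (Function.uncurry r)) (t, t) (h, 0) (h, 0) < 0 := by
  set D := fderiv ℝ (fderiv ℝ (Function.uncurry r)) (t, t)
  have hsplit : D (h, 0) = -D (0, h) := by
    rw [eq_neg_iff_add_eq_zero, ← map_add, Prod.mk_add_mk, add_zero, zero_add,
      fderiv_fderiv_apply_diag_eq_zero (hr.fderiv_right (m := 1) le_rfl |>.differentiableAt
        one_ne_zero) hcrit]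
  have hcross : 0 < D (0, h) (h, 0) := by
    refine LinearMap.apply_self_pos_of_posDef (EuclideanSpace.basisFun (Fin d) ℝ).toBasis
      (B := ContinuousLinearMap.toLinearMap₁₂
        ((D.comp (ContinuousLinearMap.inr ℝ _ _)).flip.comp (ContinuousLinearMap.inl ℝ _ _)))
      ?_ hh
    convert hpos using 2
    funext i k
    simpa [D] using (mixed_partial_eq_fderiv_fderiv_apply hr _ _).symm
  rw [hsplit, neg_apply]
  exact neg_neg_of_pos hcross

theorem exists_near_diag_quadratic_bound {E : Type*} [NormedAddCommGroup E] [NormedSpace ℝ E]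
    [ProperSpace E] {F : E × E → ℝ} {U : Set (E × E)} {S : Set E} (hS : IsCompact S)
    (hU : IsOpen U) (hSU : ∀ t ∈ S, (t, t) ∈ U) (hF : ContDiffOn ℝ 2 F U)
    (hcrit : ∀ t ∈ S, fderiv ℝ F (t, t) = 0)
    (hneg : ∀ t ∈ S, ∀ h ≠ 0, fderiv ℝ (fderiv ℝ F) (t, t) (h, 0) (h, 0) < 0) :
    ∃ c > 0, ∃ δ > 0, ∀ t ∈ S, ∀ s, ‖s - t‖ < δ → c * ‖s - t‖ ^ 2 ≤ F (t, t) - F (s, t) := by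
  set Φ : (E × E) × E → ℝ := fun q => fderiv ℝ (fderiv ℝ F) q.1 (q.2, 0) (q.2, 0)
  set K : Set ((E × E) × E) := ((fun t => (t, t)) '' S) ×ˢ sphere 0 1
  have hΦ : ContinuousOn Φ (U ×ˢ univ) := by
    have hD2 : ContinuousOn (fderiv ℝ (fderiv ℝ F)) U :=
      (hF.fderiv_of_isOpen hU (m := 1) le_rfl).continuousOn_fderiv_of_isOpen hU le_rfl
    have hdir : Continuous fun q : (E × E) × E => (q.2, (0 : E)) :=
      continuous_snd.prodMk continuous_const
    exact ((hD2.comp continuousOn_fst fun q hq => hq.1).clm_apply hdir.continuousOn).clm_apply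
      hdir.continuousOn
  have hKU : K ⊆ U ×ˢ univ := by
    rintro ⟨_, h⟩ ⟨⟨t, ht, rfl⟩, -⟩
    exact ⟨hSU t ht, trivial⟩
  have hKneg : ∀ q ∈ K, Φ q < 0 := by
    rintro ⟨_, h⟩ ⟨⟨t, ht, rfl⟩, hh⟩
    exact hneg t ht h (ne_zero_of_mem_unit_sphere ⟨h, hh⟩)
  have hK : IsCompact K :=
    (hS.image (continuous_id.prodMk continuous_id)).prod (isCompact_sphere 0 1)
  obtain ⟨c, hc, δ, hδ, hbound⟩ :=
    hK.exists_thickening_forall_le_neg (hU.prod isOpen_univ) hKU hΦ hKneg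
  refine ⟨c / 2, half_pos hc, δ, hδ, fun t ht s hst => ?_⟩
  rcases eq_or_ne s t with rfl | hne
  · simp
  set v := s - t
  have hv : 0 < ‖v‖ := norm_pos_iff.2 (sub_ne_zero.2 hne)
  have hseg : ∀ τ ∈ Icc (0 : ℝ) 1, ((t, t) + τ • (v, 0), ‖v‖⁻¹ • v) ∈ thickening δ K := by
    intro τ hτ
    refine mem_thickening_iff.2 ⟨((t, t), ‖v‖⁻¹ • v), ⟨⟨t, ht, rfl⟩, ?_⟩, ?_⟩
    · simp [norm_smul, hv.ne']
    · have hτv : ‖τ • v‖ < δ := by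
        rw [norm_smul, Real.norm_of_nonneg hτ.1]
        nlinarith [hτ.2]
      simpa [Prod.dist_eq, dist_eq_norm, hδ] using hτv
  have key := half_le_sub_of_fderiv_eq_zero_of_fderiv_fderiv_le (c := c * ‖v‖ ^ 2)
    (fun τ hτ => hF.contDiffAt (hU.mem_nhds (hbound _ (hseg τ hτ)).1.1)) (hcrit t ht)
    fun τ hτ => by
      have hΦτ := (hbound _ (hseg τ hτ)).2
      have hscale : ((v, 0) : E × E) = ‖v‖ • (‖v‖⁻¹ • v, 0) := by
        simp [smul_smul, hv.ne']
      -- keeps `rw [hscale]` from rewriting inside the base point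
      set p := (t, t) + τ • ((v, 0) : E × E)
      rw [hscale, map_smul, map_smul, smul_apply, smul_eq_mul, smul_eq_mul]
      simp only [Φ] at hΦτ
      nlinarith
  have hend : (t, t) + ((v, 0) : E × E) = (s, t) := by simp [v]
  rw [hend] at key
  linarith

theorem exists_far_diag_quadratic_bound {E : Type*} [NormedAddCommGroup E] {S : Set E}
    (hS : IsCompact S) {f : E → E → ℝ} (hf : ContinuousOn (Function.uncurry f) (S ×ˢ S))
    (hpos : ∀ s ∈ S, ∀ t ∈ S, s ≠ t → 0 < f s t) {δ : ℝ} (hδ : 0 < δ) :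
    ∃ L > 0, ∀ s ∈ S, ∀ t ∈ S, δ ≤ ‖s - t‖ → L * ‖s - t‖ ^ 2 ≤ f s t := by
  have hK : IsCompact ((S ×ˢ S) ∩ {p | δ ≤ ‖p.1 - p.2‖}) :=
    (hS.prod hS).inter_right (isClosed_le continuous_const (continuous_fst.sub continuous_snd).norm)
  obtain ⟨L, hL, hle⟩ := hK.exists_pos_mul_le (hf.mono inter_subset_left)
    ((continuous_fst.sub continuous_snd).norm.pow 2).continuousOn
    fun p ⟨⟨hp₁, hp₂⟩, hp⟩ => hpos p.1 hp₁ p.2 hp₂ fun h => by simp [h] at hp; linarith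
  exact ⟨L, hL, fun s hs t ht hst => hle (s, t) ⟨⟨hs, ht⟩, hst⟩⟩

/-- On a compact set `S`, a symmetric positive semidefinite `C²` kernel with unit
variance, strictly less than `1` off the diagonal of `S`, and positive definite
second-derivative matrices `Λ_t = (∂²r/∂s_i∂t_k(t,t))_{i,k}` satisfies
`1 - r(s,t) ≥ L‖s - t‖²` on `S × S` for some `L > 0`. -/
theorem one_sub_kernel_ge_quadratic
    {d : ℕ} (S : Set (EuclideanSpace ℝ (Fin d))) (hS : IsCompact S)
    (r : EuclideanSpace ℝ (Fin d) → EuclideanSpace ℝ (Fin d) → ℝ)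
    (U : Set (EuclideanSpace ℝ (Fin d) × EuclideanSpace ℝ (Fin d)))
    (hU : IsOpen U) (hSU : S ×ˢ S ⊆ U)
    (hC2 : ContDiffOn ℝ 2 (Function.uncurry r) U)
    (hsym : ∀ s t, r s t = r t s)
    (hpsd : ∀ (n : ℕ) (pts : Fin n → EuclideanSpace ℝ (Fin d)) (c : Fin n → ℝ),
      0 ≤ ∑ i, ∑ j, c i * c j * r (pts i) (pts j))
    (hone : ∀ t, r t t = 1)
    (hlt : ∀ s ∈ S, ∀ t ∈ S, s ≠ t → r s t < 1)
    (hpos : ∀ t ∈ S,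
      (Matrix.of fun i k : Fin d =>
        fderiv ℝ (fun t' : EuclideanSpace ℝ (Fin d) =>
          fderiv ℝ (fun s : EuclideanSpace ℝ (Fin d) => r s t') t
            (EuclideanSpace.single i 1)) t (EuclideanSpace.single k 1)).PosDef) :
    ∃ L > 0, ∀ s ∈ S, ∀ t ∈ S, 1 - r s t ≥ L * ‖s - t‖ ^ 2 := by
  have hdiagU : ∀ t ∈ S, (t, t) ∈ U := fun t ht => hSU ⟨ht, ht⟩
  have hcrit : ∀ t, fderiv ℝ (Function.uncurry r) (t, t) = 0 := fun t =>
    IsLocalMax.fderiv_eq_zero <| Eventually.of_forall fun p => show r p.1 p.2 ≤ r t t by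
      simpa [hone] using le_one_of_posSemidef_kernel hsym hpsd hone p.1 p.2
  obtain ⟨c, hc, δ, hδ, hnear⟩ := exists_near_diag_quadratic_bound hS hU hdiagU hC2
    (fun t _ => hcrit t) fun t ht _ hh => fderiv_fderiv_apply_inl_neg
      (hC2.contDiffAt (hU.mem_nhds (hdiagU t ht))) (Eventually.of_forall hcrit) (hpos t ht) hh
  obtain ⟨L, hL, hfar⟩ := exists_far_diag_quadratic_bound hS (f := fun s t => 1 - r s t)
    (by exact continuousOn_const.sub (hC2.continuousOn.mono hSU))
    (fun s hs t ht hst => sub_pos.2 (hlt s hs t ht hst)) hδ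
  refine ⟨min c L, lt_min hc hL, fun s hs t ht => ?_⟩
  rcases lt_or_ge ‖s - t‖ δ with hst | hst
  · have := hnear t ht s hst
    simp only [Function.uncurry_apply_pair, hone] at this
    nlinarith [min_le_left c L, sq_nonneg ‖s - t‖]
  · nlinarith [hfar s hs t ht hst, min_le_right c L, sq_nonneg ‖s - t‖]
end

section
/- Let ρ : ℝ → ℝ be of class C² on a neighborhood of 0 with ρ(0) = 1 and ρ'(0) = −1/2. Then 1 − ρ(w) > 0 for all sufficiently small w > 0, and lim_{w → 0⁺} (1 − ρ(w)² − 4ρ'(w)²·w)/(1 − ρ(w))² = 12ρ''(0) − 1. -/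
/-!
Put `a = (1 - ρ w) / w`, `b = (ρ' w + 1/2) / w` and `c = (ρ w - 1 + w/2) / w²`. Differentiability
of `ρ` and `ρ'` at `0` gives `a → 1/2` and `b → ρ''(0)`, and L'Hôpital's rule gives the Peano
remainder `c → ρ''(0)/2`. Substituting `ρ = 1 - a w` and `ρ' = -1/2 + b w`, the first-order terms of
the numerator cancel, leaving the quotient `(4b - 2c - a² - 4b²w) / a²`, whose limit is
`(4ρ''(0) - ρ''(0) - 1/4) / (1/4) = 12ρ''(0) - 1`.
-/

open Filter Topology

theorem tendsto_taylor_remainder_div_sq {f : ℝ → ℝ} {a f'' : ℝ}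
    (hf : ∀ᶠ x in 𝓝 a, DifferentiableAt ℝ f x) (hf'' : HasDerivAt (deriv f) f'' a) :
    Tendsto (fun x => (f x - f a - deriv f a * (x - a)) / (x - a) ^ 2) (𝓝[≠] a)
      (𝓝 (f'' / 2)) := by
  refine HasDerivAt.lhopital_zero_nhdsNE (f' := fun x => deriv f x - deriv f a)
    (g' := fun x => 2 * (x - a)) ?_ ?_ ?_ ?_ ?_ ?_
  · filter_upwards [hf.filter_mono nhdsWithin_le_nhds] with x hx
    simpa using (hx.hasDerivAt.sub_const (f a)).fun_sub
      (((hasDerivAt_id' x).sub_const a).const_mul (deriv f a))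
  · filter_upwards with x
    simpa using ((hasDerivAt_id' x).sub_const a).fun_pow 2
  · filter_upwards [self_mem_nhdsWithin] with x hx
    exact mul_ne_zero two_ne_zero (sub_ne_zero.mpr hx)
  · have hcont : ContinuousAt (fun x => f x - f a - deriv f a * (x - a)) a := by
      have := hf.self_of_nhds.continuousAt
      fun_prop
    simpa using hcont.tendsto.mono_left nhdsWithin_le_nhds
  · refine tendsto_nhdsWithin_of_tendsto_nhds ?_
    simpa using (by fun_prop : Continuous fun x : ℝ => (x - a) ^ 2).tendsto a
  · refine ((hasDerivAt_iff_tendsto_slope.mp hf'').div_const 2).congr' ?_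
    filter_upwards [self_mem_nhdsWithin] with x hx
    rw [slope_def_field, div_div, mul_comm]

theorem eventually_pos_of_tendsto_div {g : ℝ → ℝ} {c : ℝ} (hc : 0 < c)
    (hg : Tendsto (fun w => g w / w) (𝓝[>] 0) (𝓝 c)) : ∀ᶠ w in 𝓝[>] 0, 0 < g w := by
  filter_upwards [hg.eventually (eventually_gt_nhds hc), self_mem_nhdsWithin] with w hgw hw
  exact (div_pos_iff_of_pos_right hw).mp hgw

theorem normalized_quotient_eq {r d w : ℝ} (hw : w ≠ 0) (hr : 1 - r ≠ 0) :
    (1 - r ^ 2 - 4 * d ^ 2 * w) / (1 - r) ^ 2 =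
      (4 * ((d + 1 / 2) / w) - 2 * ((r - 1 + w / 2) / w ^ 2) - ((1 - r) / w) ^ 2
        - 4 * ((d + 1 / 2) / w) ^ 2 * w) / ((1 - r) / w) ^ 2 := by
  field_simp
  ring

theorem tendsto_normalized_quotient {r d : ℝ → ℝ} {A : ℝ}
    (hgap : Tendsto (fun w => (1 - r w) / w) (𝓝[>] 0) (𝓝 (1 / 2)))
    (hslope : Tendsto (fun w => (d w + 1 / 2) / w) (𝓝[>] 0) (𝓝 A))
    (hrem : Tendsto (fun w => (r w - 1 + w / 2) / w ^ 2) (𝓝[>] 0) (𝓝 (A / 2))) :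
    Tendsto (fun w => (1 - r w ^ 2 - 4 * d w ^ 2 * w) / (1 - r w) ^ 2) (𝓝[>] 0)
      (𝓝 (12 * A - 1)) := by
  have hid : Tendsto (fun w : ℝ => w) (𝓝[>] 0) (𝓝 0) :=
    tendsto_nhdsWithin_of_tendsto_nhds tendsto_id
  have hlim := ((((hslope.const_mul 4).sub (hrem.const_mul 2)).sub (hgap.pow 2)).sub
    (((hslope.pow 2).const_mul 4).mul hid)).div (hgap.pow 2) (by norm_num)
  convert hlim.congr' ?_ using 2
  · ring
  filter_upwards [eventually_pos_of_tendsto_div (by norm_num) hgap, self_mem_nhdsWithin]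
    with w hr hw
  exact (normalized_quotient_eq hw.ne' hr.ne').symm

/-- For `ρ` of class `C²` on a neighborhood of `0` with `ρ(0) = 1`, `ρ'(0) = -1/2`,
one has `1 - ρ(w) > 0` for all sufficiently small `w > 0`, and
`(1 - ρ(w)² - 4ρ'(w)²w)/(1 - ρ(w))² → 12ρ''(0) - 1` as `w → 0⁺`. -/
theorem limit_normalized_conditional_variance
    (ρ : ℝ → ℝ) (hρ : ContDiffAt ℝ 2 ρ 0)
    (h0 : ρ 0 = 1) (h1 : deriv ρ 0 = -1 / 2) :
    (∀ᶠ w in nhdsWithin (0 : ℝ) (Set.Ioi 0), 1 - ρ w > 0) ∧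
    Filter.Tendsto
      (fun w => (1 - (ρ w) ^ 2 - 4 * (deriv ρ w) ^ 2 * w) / (1 - ρ w) ^ 2)
      (nhdsWithin (0 : ℝ) (Set.Ioi 0))
      (nhds (12 * deriv (deriv ρ) 0 - 1)) := by
  set A := deriv (deriv ρ) 0
  have hdiff : ∀ᶠ x in 𝓝 0, DifferentiableAt ℝ ρ x :=
    (hρ.eventually (by simp)).mono fun x hx => hx.differentiableAt (by simp)
  have hρ' : HasDerivAt ρ (-1 / 2) 0 := h1 ▸ hdiff.self_of_nhds.hasDerivAt
  have hρ'' : HasDerivAt (deriv ρ) A 0 :=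
    ((hρ.derivWithin (m := 1) (by norm_num)).differentiableAt (by simp)).hasDerivAt
  have hgap : Tendsto (fun w => (1 - ρ w) / w) (𝓝[>] 0) (𝓝 (1 / 2)) := by
    convert hρ'.tendsto_slope_zero_right.neg using 2
    · simp only [zero_add, h0, smul_eq_mul]
      ring
    · norm_num
  have hslope : Tendsto (fun w => (deriv ρ w + 1 / 2) / w) (𝓝[>] 0) (𝓝 A) := by
    convert hρ''.tendsto_slope_zero_right using 2
    simp only [zero_add, h1, smul_eq_mul]
    ring
  have hrem : Tendsto (fun w => (ρ w - 1 + w / 2) / w ^ 2) (𝓝[>] 0) (𝓝 (A / 2)) := by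
    convert (tendsto_taylor_remainder_div_sq hdiff hρ'').mono_left (nhdsGT_le_nhdsNE 0) using 2
    simp only [h0, h1, sub_zero]
    ring
  exact ⟨eventually_pos_of_tendsto_div (by norm_num) hgap,
    tendsto_normalized_quotient hgap hslope hrem⟩
end
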